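/- arXiv:2405.05681 — 2 statements merged into one kernel-verified Lean document; each statement's English description precedes it below -/
import Mathlib

section
/- Assume g is a nondegenerate symmetric bilinear form on V and J : V → V is linear with J ∘ J = -id_V and g(J X, J Y) = g(X, Y) for all X, Y ∈ V, and define ω(X, Y) := g(J X, Y). Then for any real numbers a, b, c, the endomorphism 𝒥 := a 𝒥_{1,J} + b 𝒥_g + c 𝒥_ω of E satisfies 𝒥 ∘ 𝒥 = -(a² + b² + c²) · id_E. -/
noncomputable section

variable {V : Type*} [AddCommGroup V] [Module ℝ V] [FiniteDimensional ℝ V]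

/-- The endomorphism `𝒥_{λ,J}` of `E = V × V*`, `𝒥_{λ,J}(X,ξ) = (J X, λ J* ξ)`. -/
def Jlam (lam : ℝ) (J : V →ₗ[ℝ] V) (u : V × Module.Dual ℝ V) : V × Module.Dual ℝ V :=
  (J u.1, lam • J.dualMap u.2)

/-- The musical isomorphism `♯_h = (♭_h)⁻¹` of a nondegenerate bilinear form `h`. -/
def sharp (h : LinearMap.BilinForm ℝ V) (hh : LinearMap.BilinForm.Nondegenerate h) :
    Module.Dual ℝ V →ₗ[ℝ] V :=
  (LinearMap.BilinForm.toDual h hh).symm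

/-- The endomorphism `𝒥_h` of `E = V × V*`, `𝒥_h(X,ξ) = (-♯_h ξ, ♭_h X)`. -/
def Jform (h : LinearMap.BilinForm ℝ V) (hh : LinearMap.BilinForm.Nondegenerate h)
    (u : V × Module.Dual ℝ V) : V × Module.Dual ℝ V :=
  (-(sharp h hh u.2), h u.1)

/-! Identify `V*` with `V` through `♭_g`. Compatibility of `g` with `J` makes `J` skew-adjoint,
so `J* ♭_g = -♭_g J` and `♯_ω = -J ♯_g`; hence `𝒥` becomes the block operator
`[[a J, c J - b], [b + c J, -a J]]` on `V × V`. Its entries are polynomials in `J`, so they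
commute, and squaring it gives `-(a² + b² + c²)` by `J² = -1`. -/

section General

variable {R M : Type*} [CommRing R] [AddCommGroup M] [Module R M]

lemma bijective_of_apply_apply_eq_neg {J : M →ₗ[R] M} (hJ : ∀ X, J (J X) = -X) :
    Function.Bijective J :=
  Function.bijective_iff_has_inverse.2
    ⟨fun X => -J X, fun X => by simp [hJ], fun X => by simp [hJ]⟩

lemma nondegenerate_comp_of_bijective {B : LinearMap.BilinForm R M} (hB : B.Nondegenerate)
    {f : M →ₗ[R] M} (hf : Function.Bijective f) : (B ∘ₗ f).Nondegenerate :=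
  ⟨fun X hX => hf.1 (by rw [map_zero]; exact hB.1 _ hX),
    fun Y hY => hB.2 Y fun Z => by obtain ⟨X, rfl⟩ := hf.2 Z; exact hY X⟩

lemma apply_left_eq_neg_apply_right {B : LinearMap.BilinForm R M} {J : M →ₗ[R] M}
    (hJ : ∀ X, J (J X) = -X) (hcompat : ∀ X Y, B (J X) (J Y) = B X Y) (X Y : M) :
    B (J X) Y = -B X (J Y) := by
  simpa [hJ] using congrArg Neg.neg (hcompat X (J Y))

lemma dualMap_flat {B : LinearMap.BilinForm R M} {J : M →ₗ[R] M}
    (hanti : ∀ X Y, B (J X) Y = -B X (J Y)) (X : M) :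
    J.dualMap (B X) = -B (J X) := by
  ext Y
  simp [hanti]

def blockCombination (J : M →ₗ[R] M) (a b c : R) (w : M × M) : M × M :=
  (a • J w.1 + c • J w.2 - b • w.2, b • w.1 + c • J w.1 - a • J w.2)

lemma blockCombination_blockCombination {J : M →ₗ[R] M} (hJ : ∀ X, J (J X) = -X)
    (a b c : R) (w : M × M) :
    blockCombination J a b c (blockCombination J a b c w) = -((a ^ 2 + b ^ 2 + c ^ 2) • w) := by
  simp only [blockCombination, map_add, map_sub, map_smul, hJ]
  ext <;> simp only [Prod.fst_neg, Prod.snd_neg, Prod.smul_fst, Prod.smul_snd] <;> module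

end General

section Musical

variable (h : LinearMap.BilinForm ℝ V) (hh : h.Nondegenerate)

lemma sharp_flat (X : V) : sharp h hh (h X) = X :=
  (h.toDual hh).symm_apply_apply X

lemma flat_sharp (ξ : Module.Dual ℝ V) : h (sharp h hh ξ) = ξ :=
  LinearMap.ext fun _ => LinearMap.BilinForm.apply_toDual_symm_apply _ _

variable {h hh} {J : V →ₗ[ℝ] V}

lemma sharp_comp_flat (hJ : ∀ X, J (J X) = -X) (hω : (h ∘ₗ J).Nondegenerate) (X : V) :
    sharp (h ∘ₗ J) hω (h X) = -J X := by
  conv_rhs => rw [← sharp_flat (h ∘ₗ J) hω (-J X)]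
  congr 1
  ext Y
  simp [hJ]

lemma combination_apply_flat (hJ : ∀ X, J (J X) = -X) (hanti : ∀ X Y, h (J X) Y = -h X (J Y))
    (hω : (h ∘ₗ J).Nondegenerate) (a b c : ℝ) (w : V × V) :
    a • Jlam 1 J (w.1, h w.2) + b • Jform h hh (w.1, h w.2) + c • Jform (h ∘ₗ J) hω (w.1, h w.2) =
      ((blockCombination J a b c w).1, h (blockCombination J a b c w).2) := by
  simp only [Jlam, Jform, blockCombination, dualMap_flat hanti, sharp_flat, sharp_comp_flat hJ,
    LinearMap.comp_apply, map_add, map_sub, map_smul, one_smul, Prod.smul_mk, Prod.mk_add_mk]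
  congr 1 <;> module

end Musical

theorem spherical_combination_sq_general (g : LinearMap.BilinForm ℝ V)
    (hg : LinearMap.BilinForm.Nondegenerate g)
    (J : V →ₗ[ℝ] V) (hJ : ∀ X : V, J (J X) = -X)
    (hcompat : ∀ X Y : V, g (J X) (J Y) = g X Y) (a b c : ℝ) :
    ∃ hω : LinearMap.BilinForm.Nondegenerate (g ∘ₗ J),
      let 𝒥 : (V × Module.Dual ℝ V) → (V × Module.Dual ℝ V) :=
        fun w => a • Jlam 1 J w + b • Jform g hg w + c • Jform (g ∘ₗ J) hω w
      ∀ u : V × Module.Dual ℝ V, 𝒥 (𝒥 u) = -((a ^ 2 + b ^ 2 + c ^ 2) • u) := by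
  have hanti := apply_left_eq_neg_apply_right hJ hcompat
  have hω := nondegenerate_comp_of_bijective hg (bijective_of_apply_apply_eq_neg hJ)
  refine ⟨hω, ?_⟩
  intro 𝒥 u
  have h𝒥 (w : V × V) : 𝒥 (w.1, g w.2) =
      ((blockCombination J a b c w).1, g (blockCombination J a b c w).2) :=
    combination_apply_flat hJ hanti hω a b c w
  obtain ⟨w, rfl⟩ : ∃ w : V × V, (w.1, g w.2) = u := ⟨(u.1, sharp g hg u.2), by simp [flat_sharp]⟩
  rw [h𝒥, h𝒥, blockCombination_blockCombination hJ]
  ext <;> simp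

/-- For an almost Hermitian structure `(g, J)` and `ω = g(J·,·)`, the linear combination
`𝒥 = a 𝒥_{1,J} + b 𝒥_g + c 𝒥_ω` satisfies `𝒥 ∘ 𝒥 = -(a² + b² + c²) id`. -/
theorem spherical_combination_sq (g : LinearMap.BilinForm ℝ V)
    (hg : LinearMap.BilinForm.Nondegenerate g)
    (hsym : ∀ X Y : V, g X Y = g Y X)
    (J : V →ₗ[ℝ] V) (hJ : ∀ X : V, J (J X) = -X)
    (hcompat : ∀ X Y : V, g (J X) (J Y) = g X Y) (a b c : ℝ) :
    ∃ hω : LinearMap.BilinForm.Nondegenerate (g ∘ₗ J),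
      let 𝒥 : (V × Module.Dual ℝ V) → (V × Module.Dual ℝ V) :=
        fun w => a • Jlam 1 J w + b • Jform g hg w + c • Jform (g ∘ₗ J) hω w
      ∀ u : V × Module.Dual ℝ V, 𝒥 (𝒥 u) = -((a ^ 2 + b ^ 2 + c ^ 2) • u) :=
  spherical_combination_sq_general g hg J hJ hcompat a b c

end
end

section
/- Assume g is a nondegenerate symmetric bilinear form on V and J : V → V is linear with J ∘ J = -id_V and g(J X, J Y) = g(X, Y) for all X, Y ∈ V. Then the endomorphism 𝒥 of E defined by 𝒥(X, ξ) := (J X + ♯_g ξ, J* ξ) satisfies 𝒥 ∘ 𝒥 = -id_E and G₀(𝒥 u, 𝒥 v) = -G₀(u, v) for all u, v ∈ E; in particular, if V ≠ 0, 𝒥 is a weak generalized complex operator that is not strong. -/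
/-! A strong operator that is also an anti-isometry of `G₀` would make `G₀` vanish, since
`G₀(𝒥u, 𝒥v) = -G₀(u, 𝒥²v) = G₀(u, v)`; but `G₀` is nonzero as soon as `V ≠ 0`. For the
operator `𝒥(X,ξ) = (J X + ♯_g ξ, J* ξ)` both `𝒥² = -id` and the anti-isometry reduce to
`♯_g ∘ J* = -J ∘ ♯_g`, i.e. to `J` being skew for `g`, which is what compatibility gives. -/

noncomputable section

variable {V : Type*} [AddCommGroup V] [Module ℝ V] [FiniteDimensional ℝ V]

/-- The canonical pairing `G₀` on `E = V × V*`. -/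
def Gz (u v : V × Module.Dual ℝ V) : ℝ := (u.2 v.1 + v.2 u.1) / 2

omit [FiniteDimensional ℝ V] in
lemma Gz_neg_right (u v : V × Module.Dual ℝ V) : Gz u (-v) = -Gz u v := by
  simp only [Gz, Prod.fst_neg, Prod.snd_neg, map_neg, LinearMap.neg_apply]
  ring

omit [FiniteDimensional ℝ V] in
lemma exists_Gz_ne_zero [Nontrivial V] : ∃ u v : V × Module.Dual ℝ V, Gz u v ≠ 0 := by
  obtain ⟨X, hX⟩ := exists_ne (0 : V)
  obtain ⟨ξ, hξ⟩ := Module.Projective.exists_dual_eq_one ℝ hX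
  exact ⟨(X, 0), (0, ξ), by simp [Gz, hξ]⟩

omit [FiniteDimensional ℝ V] in
lemma not_Gz_skew_of_sq_eq_neg_of_Gz_anti [Nontrivial V]
    {𝒥 : V × Module.Dual ℝ V → V × Module.Dual ℝ V} (hsq : ∀ u, 𝒥 (𝒥 u) = -u)
    (hanti : ∀ u v, Gz (𝒥 u) (𝒥 v) = -Gz u v) :
    ¬ ∀ u v, Gz (𝒥 u) v = -Gz u (𝒥 v) := by
  intro hstrong
  obtain ⟨u, v, huv⟩ := exists_Gz_ne_zero (V := V)
  have hiso : Gz (𝒥 u) (𝒥 v) = Gz u v := by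
    rw [hstrong, hsq, Gz_neg_right, neg_neg]
  exact huv (by linarith [hanti u v])

section Compatible

variable {g : LinearMap.BilinForm ℝ V} (hg : g.Nondegenerate) {J : V →ₗ[ℝ] V}

@[simp]
lemma sharp_apply (ξ : Module.Dual ℝ V) (Y : V) : g (sharp g hg ξ) Y = ξ Y :=
  LinearMap.BilinForm.apply_toDual_symm_apply _ _

omit [FiniteDimensional ℝ V] in
lemma apply_map_eq_neg_map_apply_of_compat (hJ : ∀ X, J (J X) = -X)
    (hcompat : ∀ X Y, g (J X) (J Y) = g X Y) (X Y : V) : g X (J Y) = -g (J X) Y := by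
  rw [← hcompat, hJ, map_neg]

lemma sharp_dualMap (hskew : ∀ X Y, g X (J Y) = -g (J X) Y) (ξ : Module.Dual ℝ V) :
    sharp g hg (J.dualMap ξ) = -J (sharp g hg ξ) := by
  refine (g.toDual hg).injective (LinearMap.ext fun Y => ?_)
  rw [LinearMap.BilinForm.toDual_def, LinearMap.BilinForm.toDual_def, map_neg,
    LinearMap.neg_apply, ← hskew, sharp_apply, sharp_apply, LinearMap.dualMap_apply]

variable (g J) in
def upperTriangularOp (u : V × Module.Dual ℝ V) : V × Module.Dual ℝ V :=
  (J u.1 + sharp g hg u.2, J.dualMap u.2)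

lemma upperTriangularOp_upperTriangularOp (hJ : ∀ X, J (J X) = -X)
    (hskew : ∀ X Y, g X (J Y) = -g (J X) Y) (u : V × Module.Dual ℝ V) :
    upperTriangularOp g hg J (upperTriangularOp g hg J u) = -u := by
  ext
  · simp [upperTriangularOp, sharp_dualMap hg hskew, hJ]
  · simp [upperTriangularOp, LinearMap.dualMap_apply, hJ]

lemma Gz_upperTriangularOp (hsym : ∀ X Y, g X Y = g Y X) (hJ : ∀ X, J (J X) = -X)
    (hskew : ∀ X Y, g X (J Y) = -g (J X) Y) (u v : V × Module.Dual ℝ V) :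
    Gz (upperTriangularOp g hg J u) (upperTriangularOp g hg J v) = -Gz u v := by
  obtain ⟨X, ξ⟩ := u
  obtain ⟨Y, η⟩ := v
  have hcancel : ξ (J (sharp g hg η)) + η (J (sharp g hg ξ)) = 0 := by
    rw [← sharp_apply hg ξ, ← sharp_apply hg η, hskew, hsym (sharp g hg η), neg_add_cancel]
  simp only [Gz, upperTriangularOp, LinearMap.dualMap_apply, map_add, hJ, map_neg]
  linarith

end Compatible

/-- For an almost Hermitian structure `(g, J)`, the endomorphism
`𝒥(X,ξ) = (J X + ♯_g ξ, J* ξ)` squares to `-id` and satisfies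
`G₀(𝒥u, 𝒥v) = -G₀(u,v)`; in particular, if `V ≠ 0` it is a weak generalized
complex operator which is not strong. -/
theorem upper_triangular_weak_not_strong (g : LinearMap.BilinForm ℝ V)
    (hg : LinearMap.BilinForm.Nondegenerate g)
    (hsym : ∀ X Y : V, g X Y = g Y X)
    (J : V →ₗ[ℝ] V) (hJ : ∀ X : V, J (J X) = -X)
    (hcompat : ∀ X Y : V, g (J X) (J Y) = g X Y) :
    let 𝒥 : (V × Module.Dual ℝ V) → (V × Module.Dual ℝ V) :=
      fun u => (J u.1 + sharp g hg u.2, J.dualMap u.2)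
    (∀ u : V × Module.Dual ℝ V, 𝒥 (𝒥 u) = -u) ∧
    (∀ u v : V × Module.Dual ℝ V, Gz (𝒥 u) (𝒥 v) = -Gz u v) ∧
    (Nontrivial V →
      ¬ (∀ u v : V × Module.Dual ℝ V, Gz (𝒥 u) v = -Gz u (𝒥 v))) := by
  have hskew := apply_map_eq_neg_map_apply_of_compat hJ hcompat
  have hsq := upperTriangularOp_upperTriangularOp hg hJ hskew
  have hanti := Gz_upperTriangularOp hg hsym hJ hskew
  exact ⟨hsq, hanti, fun _ => not_Gz_skew_of_sq_eq_neg_of_Gz_anti hsq hanti⟩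

end
end
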